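/- arXiv:2402.09003 — 3 statements merged into one kernel-verified Lean document; each statement's English description precedes it below -/
import Mathlib

section
/- For d ≥ 2, the integral ∫₀² u^{d-1} I_{1-(u/2)²}((d+1)/2, 1/2) du equals 2^d · B((d+1)/2,(d+1)/2) / (d · B((d+1)/2,1/2)), where I_μ(p,q) is the regularized incomplete beta function and B is the beta function. -/
/-!
Write `a = (d - 1)/2`, so that `p = (d + 1)/2 = a + 1`. The substitution `t = 1 - s²` turns the
incomplete beta integral into `I_{1-x²}(a + 1, 1/2) = 2 ∫ₓ¹ (1 - s²)^a ds / B(a + 1, 1/2)`.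
After rescaling `u = 2v`, an integration by parts against `v^(d-1)` moves the inner integral
onto `v^d (1 - v²)^a`, and the substitution `t = v²` turns `∫₀¹ v^d (1 - v²)^a dv` into
`B(a + 1, a + 1)/2`.
-/

open Real

/-- Regularized incomplete beta function `I_μ(p,q)`. -/
noncomputable def regIncBeta (μ p q : ℝ) : ℝ :=
  (Real.Gamma (p + q) / (Real.Gamma p * Real.Gamma q)) *
    ∫ t in (0:ℝ)..μ, t ^ (p - 1) * (1 - t) ^ (q - 1)

/-- Beta function `B(p,q) = Γ(p)Γ(q)/Γ(p+q)`. -/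
noncomputable def betaFn (p q : ℝ) : ℝ := Real.Gamma p * Real.Gamma q / Real.Gamma (p + q)

open intervalIntegral Set

lemma integral_rpow_mul_one_sub_rpow_eq_betaFn {p q : ℝ} (hp : 0 < p) (hq : 0 < q) :
    ∫ t in (0:ℝ)..1, t ^ (p - 1) * (1 - t) ^ (q - 1) = betaFn p q := by
  have hbeta : Complex.betaIntegral p q
      = ((∫ t in (0:ℝ)..1, t ^ (p - 1) * (1 - t) ^ (q - 1) : ℝ) : ℂ) := by
    rw [Complex.betaIntegral, ← intervalIntegral.integral_ofReal]
    refine integral_congr fun t ht => ?_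
    rw [uIcc_of_le zero_le_one] at ht
    push_cast [Complex.ofReal_cpow ht.1, Complex.ofReal_cpow (sub_nonneg.2 ht.2)]
    rfl
  have h := Complex.betaIntegral_eq_Gamma_mul_div (u := p) (v := q)
    (by simpa using hp) (by simpa using hq)
  rw [hbeta, ← Complex.ofReal_add, Complex.Gamma_ofReal, Complex.Gamma_ofReal,
    Complex.Gamma_ofReal] at h
  exact_mod_cast h

lemma integral_rpow_mul_one_sub_rpow_neg_half_eq {a x : ℝ} (ha : 0 ≤ a) (hx : 0 < x) :
    ∫ t in (0:ℝ)..(1 - x ^ 2), t ^ a * (1 - t) ^ ((1:ℝ) / 2 - 1)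
      = 2 * ∫ s in x..1, (1 - s ^ 2) ^ a := by
  set g : ℝ → ℝ := fun t => t ^ a * (1 - t) ^ ((1:ℝ) / 2 - 1)
  have hpos : ∀ s ∈ uIcc x 1, 0 < s := fun s hs => lt_of_lt_of_le (lt_min hx one_pos) hs.1
  -- `s > 0` keeps `t = 1 - s²` away from the singularity of `(1 - t) ^ (-1/2)` at `t = 1`.
  have hg : ContinuousOn g ((fun s => 1 - s ^ 2) '' uIcc x 1) := by
    rintro _ ⟨s, hs, rfl⟩
    refine ContinuousAt.continuousWithinAt ?_
    refine (continuous_rpow_const ha).continuousAt.mul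
      ((continuousAt_const.sub continuousAt_id).rpow_const (Or.inl ?_))
    simp [(hpos s hs).ne']
  have hsubst := integral_comp_mul_deriv' (f := fun s => 1 - s ^ 2) (f' := fun s => -(2 * s))
    (fun s _ => by simpa using (hasDerivAt_pow 2 s).const_sub 1)
    (continuous_const.mul continuous_id).neg.continuousOn hg
  have hintegrand : EqOn (fun s => (g ∘ fun s => 1 - s ^ 2) s * -(2 * s))
      (fun s => -2 * (1 - s ^ 2) ^ a) (uIcc x 1) := by
    intro s hs
    have hinv : ((s ^ 2) ^ ((1:ℝ) / 2 - 1)) * s = 1 := by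
      rw [← rpow_natCast, ← rpow_mul (hpos s hs).le]
      norm_num [rpow_neg_one, (hpos s hs).ne']
    simp only [g, Function.comp, sub_sub_cancel]
    linear_combination (-2 * (1 - s ^ 2) ^ a) * hinv
  rw [integral_congr hintegrand, integral_const_mul] at hsubst
  simp only [one_pow, sub_self] at hsubst
  rw [integral_symm, ← hsubst]
  ring

lemma regIncBeta_one_sub_sq_half {a x : ℝ} (ha : 0 ≤ a) (hx : 0 < x) :
    regIncBeta (1 - x ^ 2) (a + 1) (1 / 2)
      = 2 * (∫ s in x..1, (1 - s ^ 2) ^ a) / betaFn (a + 1) (1 / 2) := by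
  rw [regIncBeta, add_sub_cancel_right, integral_rpow_mul_one_sub_rpow_neg_half_eq ha hx,
    betaFn]
  field_simp

lemma integral_pow_mul_integral_eq {f : ℝ → ℝ} (hf : Continuous f) (n : ℕ) (b : ℝ) :
    ∫ x in (0:ℝ)..b, x ^ n * ∫ s in x..b, f s
      = (∫ x in (0:ℝ)..b, x ^ (n + 1) * f x) / (n + 1) := by
  have hibp := integral_mul_deriv_eq_deriv_mul (a := 0) (b := b)
    (u := fun x => ∫ s in x..b, f s) (u' := fun x => -f x)
    (v := fun x => x ^ (n + 1) / (n + 1)) (v' := fun x => x ^ n)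
    (fun x _ => integral_hasDerivAt_left (hf.intervalIntegrable _ _)
      (hf.stronglyMeasurableAtFilter _ _) hf.continuousAt)
    (fun x _ => ((hasDerivAt_pow (n + 1) x).div_const (n + 1 : ℝ)).congr_deriv (by
      push_cast; field_simp))
    (hf.neg.intervalIntegrable _ _) ((continuous_pow n).intervalIntegrable _ _)
  simp only [integral_same, zero_mul, zero_pow (Nat.succ_ne_zero n), zero_div, mul_zero, sub_zero,
    neg_mul, integral_neg, sub_neg_eq_add, zero_add] at hibp
  rw [← integral_div]
  convert hibp using 1 <;> congr 1 <;> ext x <;> ring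

lemma integral_mul_comp_sq {g : ℝ → ℝ} (hg : Continuous g) (b : ℝ) :
    ∫ x in (0:ℝ)..b, x * g (x ^ 2) = (∫ t in (0:ℝ)..b ^ 2, g t) / 2 := by
  have hsubst := integral_comp_mul_deriv (a := 0) (b := b) (f := fun x => x ^ 2)
    (f' := fun x => 2 * x) (fun x _ => by simpa using hasDerivAt_pow 2 x)
    (continuous_const.mul continuous_id).continuousOn hg
  rw [zero_pow two_ne_zero] at hsubst
  rw [← hsubst, ← integral_div]
  congr 1 with x
  simp only [Function.comp]
  ring

lemma integral_pow_mul_one_sub_sq_rpow (n : ℕ) {b : ℝ} (hb : 0 ≤ b) :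
    ∫ x in (0:ℝ)..1, x ^ (n + 1) * (1 - x ^ 2) ^ b = betaFn (n / 2 + 1) (b + 1) / 2 := by
  have hpow : EqOn (fun x : ℝ => x ^ (n + 1) * (1 - x ^ 2) ^ b)
      (fun x => x * ((x ^ 2) ^ ((n : ℝ) / 2) * (1 - x ^ 2) ^ b)) (uIcc 0 1) := by
    intro x hx
    rw [uIcc_of_le zero_le_one] at hx
    have : (x ^ 2) ^ ((n : ℝ) / 2) = x ^ n := by
      rw [← rpow_natCast x 2, ← rpow_mul hx.1, ← rpow_natCast]
      congr 1
      push_cast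
      ring
    simp only [this]
    ring
  have hcont : Continuous fun t : ℝ => t ^ ((n : ℝ) / 2) * (1 - t) ^ b :=
    (continuous_rpow_const (by positivity)).mul
      ((continuous_const.sub continuous_id).rpow_const fun _ => Or.inr hb)
  rw [integral_congr hpow, integral_mul_comp_sq hcont, one_pow,
    ← integral_rpow_mul_one_sub_rpow_eq_betaFn (by positivity) (by linarith)]
  simp only [add_sub_cancel_right]

lemma integral_pow_mul_regIncBeta_one_sub_sq_eq (n : ℕ) :
    ∫ u in (0:ℝ)..2, u ^ n * regIncBeta (1 - (u / 2) ^ 2) (n / 2 + 1) (1 / 2)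
      = 2 ^ (n + 2) / betaFn (n / 2 + 1) (1 / 2) *
          ∫ v in (0:ℝ)..1, v ^ n * ∫ s in v..1, (1 - s ^ 2) ^ ((n : ℝ) / 2) := by
  have hscale := smul_integral_comp_mul_left (a := 0) (b := 1)
    (fun u : ℝ => u ^ n * regIncBeta (1 - (u / 2) ^ 2) (n / 2 + 1) (1 / 2)) 2
  simp only [mul_zero, mul_one, smul_eq_mul] at hscale
  have hintegrand : ∀ v ∈ uIoc (0:ℝ) 1,
      (2 * v) ^ n * regIncBeta (1 - (2 * v / 2) ^ 2) (n / 2 + 1) (1 / 2)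
        = 2 ^ (n + 1) / betaFn (n / 2 + 1) (1 / 2) *
          (v ^ n * ∫ s in v..1, (1 - s ^ 2) ^ ((n : ℝ) / 2)) := by
    intro v hv
    rw [uIoc_of_le zero_le_one] at hv
    rw [mul_div_cancel_left₀ v two_ne_zero, regIncBeta_one_sub_sq_half (by positivity) hv.1]
    ring
  rw [← hscale, integral_congr_ae (MeasureTheory.ae_of_all _ hintegrand), integral_const_mul]
  ring

theorem stmt0 (d : ℕ) (hd : 2 ≤ d) :
    ∫ u in (0:ℝ)..2, u ^ (d - 1) * regIncBeta (1 - (u / 2) ^ 2) (((d : ℝ) + 1) / 2) (1 / 2)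
      = 2 ^ d * betaFn (((d : ℝ) + 1) / 2) (((d : ℝ) + 1) / 2) /
          (d * betaFn (((d : ℝ) + 1) / 2) (1 / 2)) := by
  obtain ⟨n, rfl⟩ : ∃ n, d = n + 1 := ⟨d - 1, by omega⟩
  have hp : (((n + 1 : ℕ) : ℝ) + 1) / 2 = n / 2 + 1 := by push_cast; ring
  have hn : (0 : ℝ) ≤ n / 2 := by positivity
  have hcont : Continuous fun s : ℝ => (1 - s ^ 2) ^ ((n : ℝ) / 2) :=
    (continuous_const.sub (continuous_pow 2)).rpow_const fun _ => Or.inr hn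
  rw [hp, Nat.add_sub_cancel, integral_pow_mul_regIncBeta_one_sub_sq_eq,
    integral_pow_mul_integral_eq hcont, integral_pow_mul_one_sub_sq_rpow n hn]
  push_cast
  field_simp
  ring
end

section
/- Let φ(x,y,ρ) = (1/(2π√(1−ρ²))) exp(−(x² + y² − 2ρxy)/(2(1−ρ²))) be the bivariate standard normal density with correlation ρ ∈ (−1,1), and let φ(y) be the standard normal density. Then for every u ∈ ℝ and ρ ∈ [0,1): ∫_u^∞ ∫_u^∞ φ(x,y,ρ) dx dy = (∫_u^∞ φ(y) dy)² + (1/(2π)) ∫₀^ρ exp(−u²/(1+v)) (1−v²)^{-1/2} dv. -/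
/-!
Write `P(ρ)` for the left-hand side. Plackett's identity `∂φ/∂ρ = ∂²φ/∂x∂y` turns `P'(ρ)` into
the integral of a mixed second derivative over the quadrant `[u, ∞)²`, which the fundamental
theorem of calculus on `[u, ∞)` (twice) evaluates to `φ(u, u, ρ)`. At `ρ = 0` the density
factors as `φ(x) φ(y)`, so integrating `P'` from `0` to `ρ` gives the formula. Differentiation
under the integral sign is justified by the envelope `exp (-x²/8) * exp (-y²/8)`, which dominates
`φ(x, y, v)` times anything of size at most `(1 + x²)(1 + y²)`, uniformly for `|v| ≤ r < 1`.
-/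

open Real MeasureTheory

/-- Standard Gaussian density. -/
noncomputable def gphi (y : ℝ) : ℝ := (1 / Real.sqrt (2 * π)) * Real.exp (-y ^ 2 / 2)

/-- Bivariate standard Gaussian density with correlation `ρ`. -/
noncomputable def biphi (x y ρ : ℝ) : ℝ :=
  (1 / (2 * π * Real.sqrt (1 - ρ ^ 2))) *
    Real.exp (-(x ^ 2 + y ^ 2 - 2 * ρ * x * y) / (2 * (1 - ρ ^ 2)))

open Filter Set Topology

noncomputable def biphiDerivFst (x y v : ℝ) : ℝ := biphi x y v * (-(x - v * y) / (1 - v ^ 2))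

noncomputable def biphiMixedDeriv (x y v : ℝ) : ℝ :=
  biphi x y v * (((x - v * y) * (y - v * x) + v * (1 - v ^ 2)) / (1 - v ^ 2) ^ 2)

lemma biphi_comm (x y v : ℝ) : biphi x y v = biphi y x v := by
  unfold biphi; ring_nf

lemma hasDerivAt_biphi_fst (x y v : ℝ) :
    HasDerivAt (biphi · y v) (biphiDerivFst x y v) x := by
  unfold biphiDerivFst biphi
  generalize 1 - v ^ 2 = s
  refine (((((hasDerivAt_pow 2 x).add_const (y ^ 2)).sub
    (((hasDerivAt_id x).const_mul (2 * v)).mul_const y)).neg.div_const _).exp.const_mul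
      _).congr_deriv ?_
  simp only [id, Nat.cast_ofNat, Pi.neg_apply, Pi.sub_apply]
  ring

lemma hasDerivAt_biphi_snd (x y v : ℝ) :
    HasDerivAt (biphi x · v) (biphi x y v * (-(y - v * x) / (1 - v ^ 2))) y := by
  simp_rw [biphi_comm x]
  exact hasDerivAt_biphi_fst y x v

lemma hasDerivAt_biphiDerivFst_snd (x y : ℝ) {v : ℝ} (hv : |v| < 1) :
    HasDerivAt (biphiDerivFst x · v) (biphiMixedDeriv x y v) y := by
  have hv2 : 1 - v ^ 2 ≠ 0 := by nlinarith [sq_abs v, abs_nonneg v]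
  have h : HasDerivAt (fun y => -(x - v * y) / (1 - v ^ 2)) (v / (1 - v ^ 2)) y := by
    refine ((((hasDerivAt_id y).const_mul v).const_sub x).neg.div_const _).congr_deriv ?_
    simp only [mul_one, neg_neg]
  refine ((hasDerivAt_biphi_snd x y v).mul h).congr_deriv ?_
  unfold biphiMixedDeriv
  field_simp

/-- Plackett's identity: the bivariate density solves `∂φ/∂ρ = ∂²φ/∂x∂y`. -/
lemma hasDerivAt_biphi_corr (x y : ℝ) {v : ℝ} (hv : |v| < 1) :
    HasDerivAt (biphi x y ·) (biphiMixedDeriv x y v) v := by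
  have hS : 0 < 1 - v ^ 2 := by nlinarith [sq_abs v, abs_nonneg v]
  have hs : HasDerivAt (fun v => 1 - v ^ 2) (-(2 * v)) v := by
    simpa using (hasDerivAt_pow 2 v).const_sub 1
  have hc : HasDerivAt (fun v => 1 / (2 * π * √(1 - v ^ 2)))
      (-(2 * π * (-(2 * v) / (2 * √(1 - v ^ 2)))) / (2 * π * √(1 - v ^ 2)) ^ 2) v := by
    simpa only [one_div, Pi.inv_def] using ((hs.sqrt hS.ne').const_mul (2 * π)).inv (by positivity)
  have he : HasDerivAt (fun v => -(x ^ 2 + y ^ 2 - 2 * v * x * y) / (2 * (1 - v ^ 2)))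
      ((2 * x * y * (2 * (1 - v ^ 2)) - -(x ^ 2 + y ^ 2 - 2 * v * x * y) * (2 * -(2 * v)))
        / (2 * (1 - v ^ 2)) ^ 2) v := by
    refine HasDerivAt.div ?_ (hs.const_mul 2) (by positivity)
    refine (((((hasDerivAt_id v).const_mul 2).mul_const x).mul_const y).const_sub
      (x ^ 2 + y ^ 2)).neg.congr_deriv ?_
    simp
  refine (hc.mul he.exp).congr_deriv ?_
  have hsq : √(1 - v ^ 2) ^ 2 = 1 - v ^ 2 := sq_sqrt hS.le
  unfold biphiMixedDeriv biphi
  field_simp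
  rw [hsq]
  ring

lemma biphi_diag (u : ℝ) {v : ℝ} (hv : |v| < 1) :
    biphi u u v = 1 / (2 * π) * (exp (-u ^ 2 / (1 + v)) * (1 - v ^ 2) ^ (-(1 : ℝ) / 2)) := by
  have hS : 0 < 1 - v ^ 2 := by nlinarith [sq_abs v, abs_nonneg v]
  have h1v : 0 < 1 + v := by linarith [neg_abs_le v]
  have hexp : -(u ^ 2 + u ^ 2 - 2 * v * u * u) / (2 * (1 - v ^ 2)) = -u ^ 2 / (1 + v) := by
    rw [div_eq_div_iff (by positivity) h1v.ne']
    ring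
  rw [biphi, hexp, show -(1 : ℝ) / 2 = -(1 / 2) by norm_num, rpow_neg hS.le, ← sqrt_eq_rpow]
  field_simp

lemma biphi_zero (x y : ℝ) : biphi x y 0 = gphi x * gphi y := by
  have h2π : √(2 * π) * √(2 * π) = 2 * π := mul_self_sqrt (by positivity)
  rw [biphi, gphi, gphi, mul_mul_mul_comm, ← exp_add, one_div_mul_one_div, h2π]
  norm_num
  ring_nf

noncomputable def gaussEnvelope (x y : ℝ) : ℝ := exp (-x ^ 2 / 8) * exp (-y ^ 2 / 8)

lemma biphi_le_mul_exp {r v : ℝ} (hr : r < 1) (hv : |v| ≤ r) (x y : ℝ) :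
    biphi x y v ≤ 1 / (2 * π * √(1 - r ^ 2)) * exp (-(x ^ 2 + y ^ 2) / 4) := by
  have hvr : v ^ 2 ≤ r ^ 2 := sq_le_sq' (abs_le.1 hv).1 (abs_le.1 hv).2
  have hS : 0 < 1 - r ^ 2 := by nlinarith [abs_nonneg v]
  unfold biphi
  gcongr 1 / (2 * π * √?_) * ?_
  · linarith
  · rw [exp_le_exp, div_le_div_iff₀ (by linarith) (by norm_num)]
    -- `(1 + v²)(x² + y²) - 4vxy = (vx - y)² + (x - vy)²`
    nlinarith [sq_nonneg (v * x - y), sq_nonneg (x - v * y)]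

lemma exp_neg_sq_div_four_mul_le (x y : ℝ) :
    exp (-(x ^ 2 + y ^ 2) / 4) * ((1 + x ^ 2) * (1 + y ^ 2)) ≤ 64 * gaussEnvelope x y := by
  have hpoly : ∀ t : ℝ, 1 + t ^ 2 ≤ 8 * exp (t ^ 2 / 8) := fun t => by
    nlinarith [add_one_le_exp (t ^ 2 / 8)]
  calc exp (-(x ^ 2 + y ^ 2) / 4) * ((1 + x ^ 2) * (1 + y ^ 2))
      ≤ exp (-(x ^ 2 + y ^ 2) / 4) * ((8 * exp (x ^ 2 / 8)) * (8 * exp (y ^ 2 / 8))) := by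
        gcongr <;> exact hpoly _
    _ = 64 * gaussEnvelope x y := by
        rw [gaussEnvelope, mul_mul_mul_comm, ← exp_add, mul_left_comm, ← exp_add, ← exp_add]
        ring_nf

lemma abs_biphi_mul_le {r v : ℝ} (hr : r < 1) (hv : |v| ≤ r) {x y p C : ℝ}
    (hp : |p| ≤ C * ((1 + x ^ 2) * (1 + y ^ 2))) :
    |biphi x y v * p| ≤ C * (32 / (π * √(1 - r ^ 2))) * gaussEnvelope x y := by
  have hC : 0 ≤ C := nonneg_of_mul_nonneg_left ((abs_nonneg p).trans hp) (by positivity)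
  have hb : 0 ≤ biphi x y v := by unfold biphi; positivity
  calc |biphi x y v * p|
      ≤ 1 / (2 * π * √(1 - r ^ 2)) * exp (-(x ^ 2 + y ^ 2) / 4)
          * (C * ((1 + x ^ 2) * (1 + y ^ 2))) := by
        rw [abs_mul, abs_of_nonneg hb]
        exact mul_le_mul (biphi_le_mul_exp hr hv x y) hp (abs_nonneg p) (by positivity)
    _ = C / (2 * π * √(1 - r ^ 2)) *
          (exp (-(x ^ 2 + y ^ 2) / 4) * ((1 + x ^ 2) * (1 + y ^ 2))) := by ring
    _ ≤ C / (2 * π * √(1 - r ^ 2)) * (64 * gaussEnvelope x y) := by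
        exact mul_le_mul_of_nonneg_left (exp_neg_sq_div_four_mul_le x y) (by positivity)
    _ = C * (32 / (π * √(1 - r ^ 2))) * gaussEnvelope x y := by
        field_simp; ring

lemma exists_abs_biphi_le {r : ℝ} (hr : r < 1) :
    ∃ C, ∀ v, |v| ≤ r → ∀ x y, |biphi x y v| ≤ C * gaussEnvelope x y := by
  refine ⟨1 * (32 / (π * √(1 - r ^ 2))), fun v hv x y => ?_⟩
  have hp : |(1 : ℝ)| ≤ 1 * ((1 + x ^ 2) * (1 + y ^ 2)) := by
    rw [abs_one, one_mul]
    nlinarith [sq_nonneg x, sq_nonneg y, mul_nonneg (sq_nonneg x) (sq_nonneg y)]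
  simpa using abs_biphi_mul_le hr hv hp

lemma exists_abs_biphiDerivFst_le {r : ℝ} (hr : r < 1) :
    ∃ C, ∀ v, |v| ≤ r → ∀ x y, |biphiDerivFst x y v| ≤ C * gaussEnvelope x y := by
  refine ⟨1 / (1 - r ^ 2) * (32 / (π * √(1 - r ^ 2))), fun v hv x y => ?_⟩
  have hv1 : v ^ 2 ≤ 1 := by nlinarith [sq_abs v, abs_nonneg v]
  have hvr : v ^ 2 ≤ r ^ 2 := sq_le_sq' (abs_le.1 hv).1 (abs_le.1 hv).2
  have hS : 0 < 1 - r ^ 2 := by nlinarith [abs_nonneg v]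
  have hnum : |x - v * y| ≤ (1 + x ^ 2) * (1 + y ^ 2) := abs_le.2
    ⟨by nlinarith [sq_nonneg (x + 1), sq_nonneg (v - y), mul_nonneg (sq_nonneg x) (sq_nonneg y)],
     by nlinarith [sq_nonneg (x - 1), sq_nonneg (v + y), mul_nonneg (sq_nonneg x) (sq_nonneg y)]⟩
  refine abs_biphi_mul_le hr hv ?_
  rw [abs_div, abs_neg, abs_of_pos (by linarith : (0 : ℝ) < 1 - v ^ 2), one_div_mul_eq_div]
  exact div_le_div₀ (by positivity) hnum hS (by linarith)

lemma exists_abs_biphiMixedDeriv_le {r : ℝ} (hr : r < 1) :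
    ∃ C, ∀ v, |v| ≤ r → ∀ x y, |biphiMixedDeriv x y v| ≤ C * gaussEnvelope x y := by
  refine ⟨3 / (1 - r ^ 2) ^ 2 * (32 / (π * √(1 - r ^ 2))), fun v hv x y => ?_⟩
  have hv1 : v ^ 2 ≤ 1 := by nlinarith [sq_abs v, abs_nonneg v]
  have hvr : v ^ 2 ≤ r ^ 2 := sq_le_sq' (abs_le.1 hv).1 (abs_le.1 hv).2
  have hS : 0 < 1 - r ^ 2 := by nlinarith [abs_nonneg v]
  have h1 : (x - v * y) ^ 2 ≤ 2 * (x ^ 2 + y ^ 2) := by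
    nlinarith [sq_nonneg (x + v * y), mul_le_mul_of_nonneg_right hv1 (sq_nonneg y)]
  have h2 : (y - v * x) ^ 2 ≤ 2 * (x ^ 2 + y ^ 2) := by
    nlinarith [sq_nonneg (y + v * x), mul_le_mul_of_nonneg_right hv1 (sq_nonneg x)]
  have h3 : |(x - v * y) * (y - v * x)| ≤ 2 * (x ^ 2 + y ^ 2) := abs_le.2
    ⟨by nlinarith [sq_nonneg (x - v * y + (y - v * x))],
     by nlinarith [sq_nonneg (x - v * y - (y - v * x))]⟩
  have h4 : |v * (1 - v ^ 2)| ≤ 1 := by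
    rw [abs_mul, abs_of_nonneg (by linarith : 0 ≤ 1 - v ^ 2)]
    nlinarith [abs_nonneg v, sq_abs v, abs_le.2 (abs_le.1 hv)]
  have hnum : |(x - v * y) * (y - v * x) + v * (1 - v ^ 2)| ≤ 3 * ((1 + x ^ 2) * (1 + y ^ 2)) := by
    nlinarith [abs_add_le ((x - v * y) * (y - v * x)) (v * (1 - v ^ 2)),
      mul_nonneg (sq_nonneg x) (sq_nonneg y)]
  refine abs_biphi_mul_le hr hv ?_
  rw [abs_div, abs_of_pos (by nlinarith : (0 : ℝ) < (1 - v ^ 2) ^ 2), div_mul_eq_mul_div]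
  exact div_le_div₀ (by positivity) hnum (by positivity)
    (pow_le_pow_left₀ hS.le (by linarith) 2)

lemma integrable_exp_neg_sq_div_eight : Integrable fun x : ℝ => exp (-x ^ 2 / 8) := by
  simpa [neg_div, div_eq_inv_mul] using integrable_exp_neg_mul_sq (by norm_num : (0 : ℝ) < 1 / 8)

lemma integrable_gaussEnvelope : Integrable fun z : ℝ × ℝ => gaussEnvelope z.1 z.2 :=
  integrable_exp_neg_sq_div_eight.mul_prod integrable_exp_neg_sq_div_eight

section Dominated

variable {f : ℝ × ℝ → ℝ} (hf : Continuous f) {C : ℝ} (h : ∀ z, |f z| ≤ C * gaussEnvelope z.1 z.2)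
include hf h

lemma integrable_of_abs_le_gaussEnvelope : Integrable f :=
  (integrable_gaussEnvelope.const_mul C).mono' hf.aestronglyMeasurable (ae_of_all _ h)

lemma integrable_fun_snd_of_abs_le_gaussEnvelope (x : ℝ) : Integrable fun y => f (x, y) :=
  (integrable_exp_neg_sq_div_eight.const_mul (C * exp (-x ^ 2 / 8))).mono'
    (hf.comp (Continuous.prodMk_right x)).aestronglyMeasurable
    (ae_of_all _ fun y => (h (x, y)).trans_eq (by rw [gaussEnvelope]; ring))

lemma integrable_fun_fst_of_abs_le_gaussEnvelope (y : ℝ) : Integrable fun x => f (x, y) :=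
  (integrable_exp_neg_sq_div_eight.const_mul (C * exp (-y ^ 2 / 8))).mono'
    (hf.comp (Continuous.prodMk_left y)).aestronglyMeasurable
    (ae_of_all _ fun x => (h (x, y)).trans_eq (by rw [gaussEnvelope]; ring))

end Dominated

lemma continuous_biphi (v : ℝ) : Continuous fun z : ℝ × ℝ => biphi z.1 z.2 v := by
  unfold biphi; fun_prop

lemma continuous_biphiDerivFst (v : ℝ) : Continuous fun z : ℝ × ℝ => biphiDerivFst z.1 z.2 v := by
  unfold biphiDerivFst biphi; fun_prop

lemma continuous_biphiMixedDeriv (v : ℝ) :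
    Continuous fun z : ℝ × ℝ => biphiMixedDeriv z.1 z.2 v := by
  unfold biphiMixedDeriv biphi; fun_prop

lemma integrable_biphi {v : ℝ} (hv : |v| < 1) : Integrable fun z : ℝ × ℝ => biphi z.1 z.2 v := by
  obtain ⟨C, hC⟩ := exists_abs_biphi_le hv
  exact integrable_of_abs_le_gaussEnvelope (continuous_biphi v) fun z => hC v le_rfl z.1 z.2

lemma integral_Ici_of_hasDerivAt_of_integrableOn {E : Type*} [NormedAddCommGroup E]
    [NormedSpace ℝ E] [CompleteSpace E] {f f' : ℝ → E} {u : ℝ}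
    (hderiv : ∀ x ∈ Ici u, HasDerivAt f (f' x) x) (hf' : IntegrableOn f' (Ioi u))
    (hf : IntegrableOn f (Ioi u)) : ∫ x in Ici u, f' x = -f u := by
  have hlim := tendsto_zero_of_hasDerivAt_of_integrableOn_Ioi
    (fun x hx => hderiv x (mem_Ici_of_Ioi hx)) hf' hf
  rw [integral_Ici_eq_integral_Ioi, integral_Ioi_of_hasDerivAt_of_tendsto' hderiv hf' hlim,
    zero_sub]

lemma integral_biphiMixedDeriv_Ici (u : ℝ) {v : ℝ} (hv : |v| < 1) :
    ∫ z in Ici u ×ˢ Ici u, biphiMixedDeriv z.1 z.2 v = biphi u u v := by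
  obtain ⟨C₀, hC₀⟩ := exists_abs_biphi_le hv
  obtain ⟨C₁, hC₁⟩ := exists_abs_biphiDerivFst_le hv
  obtain ⟨C₂, hC₂⟩ := exists_abs_biphiMixedDeriv_le hv
  have hint_mixed (x : ℝ) : Integrable (biphiMixedDeriv x · v) :=
    integrable_fun_snd_of_abs_le_gaussEnvelope (continuous_biphiMixedDeriv v)
      (fun z => hC₂ v le_rfl z.1 z.2) x
  have hint_fst_snd (x : ℝ) : Integrable (biphiDerivFst x · v) :=
    integrable_fun_snd_of_abs_le_gaussEnvelope (continuous_biphiDerivFst v)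
      (fun z => hC₁ v le_rfl z.1 z.2) x
  have hint_fst_fst : Integrable (biphiDerivFst · u v) :=
    integrable_fun_fst_of_abs_le_gaussEnvelope (continuous_biphiDerivFst v)
      (fun z => hC₁ v le_rfl z.1 z.2) u
  have hint_biphi : Integrable (biphi · u v) :=
    integrable_fun_fst_of_abs_le_gaussEnvelope (continuous_biphi v)
      (fun z => hC₀ v le_rfl z.1 z.2) u
  have inner : ∀ x, ∫ y in Ici u, biphiMixedDeriv x y v = -biphiDerivFst x u v := fun x =>
    integral_Ici_of_hasDerivAt_of_integrableOn (fun y _ => hasDerivAt_biphiDerivFst_snd x y hv)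
      (hint_mixed x).integrableOn (hint_fst_snd x).integrableOn
  have hint : IntegrableOn (fun z : ℝ × ℝ => biphiMixedDeriv z.1 z.2 v) (Ici u ×ˢ Ici u) :=
    (integrable_of_abs_le_gaussEnvelope (continuous_biphiMixedDeriv v)
      fun z => hC₂ v le_rfl z.1 z.2).integrableOn
  rw [Measure.volume_eq_prod, setIntegral_prod _ hint]
  simp_rw [inner]
  rw [integral_neg, integral_Ici_of_hasDerivAt_of_integrableOn
    (fun x _ => hasDerivAt_biphi_fst x u v) hint_fst_fst.integrableOn hint_biphi.integrableOn,
    neg_neg]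

lemma hasDerivAt_setIntegral_biphi (S : Set (ℝ × ℝ)) {v : ℝ} (hv : |v| < 1) :
    HasDerivAt (fun w => ∫ z in S, biphi z.1 z.2 w) (∫ z in S, biphiMixedDeriv z.1 z.2 v) v := by
  obtain ⟨r, hvr, hr⟩ := exists_between hv
  have hnhds : Icc (-r) r ∈ 𝓝 v := Icc_mem_nhds (abs_lt.1 hvr).1 (abs_lt.1 hvr).2
  obtain ⟨C, hC⟩ := exists_abs_biphiMixedDeriv_le hr
  exact (hasDerivAt_integral_of_dominated_loc_of_deriv_le hnhds
    (Eventually.of_forall fun w => (continuous_biphi w).aestronglyMeasurable)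
    (integrable_biphi hv).integrableOn
    (continuous_biphiMixedDeriv v).aestronglyMeasurable
    (ae_of_all _ fun z w hw => hC w (abs_le.2 hw) z.1 z.2)
    (integrable_gaussEnvelope.const_mul C).integrableOn
    (ae_of_all _ fun z w hw => hasDerivAt_biphi_corr z.1 z.2 ((abs_le.2 hw).trans_lt hr))).2

lemma setIntegral_biphi_zero (s t : Set ℝ) :
    ∫ z in s ×ˢ t, biphi z.1 z.2 0 = (∫ x in s, gphi x) * ∫ y in t, gphi y := by
  simp_rw [biphi_zero]
  exact setIntegral_prod_mul gphi gphi s t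

theorem stmt3 (u ρ : ℝ) (hρ : ρ ∈ Set.Ico (0:ℝ) 1) :
    ∫ x in Set.Ici u, ∫ y in Set.Ici u, biphi x y ρ
      = (∫ y in Set.Ici u, gphi y) ^ 2 +
        (1 / (2 * π)) * ∫ v in (0:ℝ)..ρ, Real.exp (-u ^ 2 / (1 + v)) * (1 - v ^ 2) ^ (-(1:ℝ) / 2) := by
  obtain ⟨hρ0, hρ1⟩ := hρ
  have hcorr : ∀ v ∈ uIcc 0 ρ, |v| < 1 := fun v hv => by
    rw [uIcc_of_le hρ0] at hv
    exact abs_lt.2 ⟨by linarith [hv.1], hv.2.trans_lt hρ1⟩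
  have hplackett : ∀ v ∈ uIcc 0 ρ,
      HasDerivAt (fun w => ∫ z in Ici u ×ˢ Ici u, biphi z.1 z.2 w) (biphi u u v) v := fun v hv => by
    simpa only [integral_biphiMixedDeriv_Ici u (hcorr v hv)]
      using hasDerivAt_setIntegral_biphi (Ici u ×ˢ Ici u) (hcorr v hv)
  have hftc := intervalIntegral.integral_eq_sub_of_hasDerivAt hplackett
    (ContinuousOn.intervalIntegrable fun v hv =>
      (hasDerivAt_biphi_corr u u (hcorr v hv)).continuousAt.continuousWithinAt)
  have hdiag : ∫ v in (0 : ℝ)..ρ, biphi u u v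
      = 1 / (2 * π) * ∫ v in (0 : ℝ)..ρ, exp (-u ^ 2 / (1 + v)) * (1 - v ^ 2) ^ (-(1 : ℝ) / 2) := by
    rw [← intervalIntegral.integral_const_mul]
    exact intervalIntegral.integral_congr fun v hv => biphi_diag u (hcorr v hv)
  rw [← setIntegral_prod _ (integrable_biphi (hcorr ρ right_mem_uIcc)).integrableOn,
    ← Measure.volume_eq_prod, ← hdiag, hftc, setIntegral_biphi_zero]
  ring
end

section
/- Let C(z,τ) = (σ²/(1 + a τ^{2α})^{βd/2}) · (1 + c̃ (z²/(1 + a τ^{2α})^β)^{γ̃})^{−ν} with a, c̃, σ² > 0, 0 < α ≤ 1, 0 < β ≤ 1, 0 < γ̃ ≤ 1, ν > 0. If γ > αβ and γ̃ν < 1/(2(γ − αβ)), then for every δ₁ ∈ (0, 1 − 2νγ̃(γ − αβ)) and δ₂ ∈ (0, 1 − αβ/γ): lim_{T→∞} T^{−δ₁ − γdδ₂} ∫₀^T (1 − τ/T) ∫₀^{2T^γ} z^{d-1} C(z,τ) I_{1-(z/(2T^γ))²}((d+1)/2, 1/2) dz dτ = ∞. -/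
/-!
The integrand is nonnegative, so the double integral is at least its part over
`τ ∈ [T/2, 3T/4]`, `z ∈ [T^γ/2, T^γ]`. There `1 - τ/T ≥ 1/4`, the incomplete beta factor is at
least `I_{3/4}((d+1)/2, 1/2) > 0`, `z^(d-1) ≍ T^(γ(d-1))`, the temporal factor of `C` is
`≍ T^(-αβd)` and the scaled distance `z² / (1 + aτ^(2α))^β` is `O(T^(2(γ-αβ)))`. Hence the integral
is `≳ T^(1 + γd - αβd - 2γ'ν(γ-αβ))`, and the conditions on `δ₁, δ₂` make this exponent exceed
`δ₁ + γdδ₂`.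
-/

open Real Filter MeasureTheory Set intervalIntegral

section RegIncBeta

variable {p q : ℝ}

lemma intervalIntegrable_betaIntegrand (hp : 1 ≤ p) (hq : 0 < q) :
    IntervalIntegrable (fun t : ℝ => t ^ (p - 1) * (1 - t) ^ (q - 1)) volume 0 1 := by
  have h : IntervalIntegrable (fun t : ℝ => (1 - t) ^ (q - 1)) volume 0 1 := by
    simpa using ((intervalIntegrable_rpow' (a := 0) (b := 1) (by linarith)).comp_sub_left 1).symm
  exact h.continuousOn_mul (continuous_rpow_const (by linarith)).continuousOn

lemma betaIntegrand_nonneg {t : ℝ} (ht : t ∈ Icc (0:ℝ) 1) :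
    0 ≤ t ^ (p - 1) * (1 - t) ^ (q - 1) :=
  mul_nonneg (rpow_nonneg ht.1 _) (rpow_nonneg (by linarith [ht.2]) _)

lemma Gamma_add_div_Gamma_mul_Gamma_pos (hp : 0 < p) (hq : 0 < q) :
    0 < Gamma (p + q) / (Gamma p * Gamma q) := by
  have := Gamma_pos_of_pos hp
  have := Gamma_pos_of_pos hq
  positivity

lemma regIncBeta_zero : regIncBeta 0 p q = 0 := by
  simp [regIncBeta]

lemma regIncBeta_monotoneOn (hp : 1 ≤ p) (hq : 0 < q) :
    MonotoneOn (fun μ => regIncBeta μ p q) (Icc 0 1) := by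
  intro μ₁ hμ₁ μ₂ hμ₂ h12
  refine mul_le_mul_of_nonneg_left ?_ (Gamma_add_div_Gamma_mul_Gamma_pos (by linarith) hq).le
  refine integral_mono_interval le_rfl hμ₁.1 h12 ?_ ?_
  · exact (ae_restrict_iff' measurableSet_Ioc).2 (.of_forall fun t ht =>
      betaIntegrand_nonneg ⟨ht.1.le, ht.2.trans hμ₂.2⟩)
  · exact (intervalIntegrable_betaIntegrand hp hq).mono_set (by
      rw [uIcc_of_le hμ₂.1, uIcc_of_le zero_le_one]; exact Icc_subset_Icc le_rfl hμ₂.2)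

lemma regIncBeta_nonneg (hp : 1 ≤ p) (hq : 0 < q) {μ : ℝ} (hμ : μ ∈ Icc (0:ℝ) 1) :
    0 ≤ regIncBeta μ p q := by
  simpa [regIncBeta_zero] using
    regIncBeta_monotoneOn hp hq ⟨le_rfl, zero_le_one⟩ hμ hμ.1

lemma regIncBeta_pos (hp : 1 ≤ p) (hq : 0 < q) {μ : ℝ} (hμ : μ ∈ Ioc (0:ℝ) 1) :
    0 < regIncBeta μ p q := by
  refine mul_pos (Gamma_add_div_Gamma_mul_Gamma_pos (by linarith) hq) ?_
  refine intervalIntegral_pos_of_pos_on ?_ (fun t ht => ?_) hμ.1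
  · exact (intervalIntegrable_betaIntegrand hp hq).mono_set (by
      rw [uIcc_of_le hμ.1.le, uIcc_of_le zero_le_one]; exact Icc_subset_Icc le_rfl hμ.2)
  · exact mul_pos (rpow_pos_of_pos ht.1 _) (rpow_pos_of_pos (by linarith [ht.2, hμ.2]) _)

lemma continuousOn_regIncBeta (hp : 1 ≤ p) (hq : 0 < q) :
    ContinuousOn (fun μ => regIncBeta μ p q) (Icc 0 1) := by
  refine continuousOn_const.mul ?_
  have h := continuousOn_primitive_interval (a := 0) (b := 1)
    (f := fun t : ℝ => t ^ (p - 1) * (1 - t) ^ (q - 1)) (μ := volume) (by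
      rw [uIcc_of_le zero_le_one]
      exact (intervalIntegrable_iff_integrableOn_Icc_of_le zero_le_one).1
        (intervalIntegrable_betaIntegrand hp hq))
  rwa [uIcc_of_le zero_le_one] at h

end RegIncBeta

lemma continuousOn_intervalIntegral_of_continuousOn_prod {E : Type*} [NormedAddCommGroup E]
    [NormedSpace ℝ E] {f : ℝ → ℝ → E} {a b c d : ℝ} (hab : a ≤ b) (hcd : c ≤ d)
    (hf : ContinuousOn (Function.uncurry f) (Icc a b ×ˢ Icc c d)) :
    ContinuousOn (fun x => ∫ t in c..d, f x t) (Icc a b) := by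
  -- Extend `f` continuously to the whole plane by clamping both arguments to the rectangle.
  set g : ℝ → ℝ → E := fun x t => f (projIcc a b hab x) (projIcc c d hcd t)
  have hproj : Continuous fun p : ℝ × ℝ =>
      ((projIcc a b hab p.1 : ℝ), (projIcc c d hcd p.2 : ℝ)) := by fun_prop
  have hg : Continuous (Function.uncurry g) :=
    hf.comp_continuous hproj fun p => ⟨Subtype.prop _, Subtype.prop _⟩
  refine (continuous_parametric_intervalIntegral_of_continuous' hg c d).continuousOn.congr
    fun x hx => integral_congr fun t ht => ?_
  rw [uIcc_of_le hcd] at ht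
  simp [g, projIcc_of_mem hab hx, projIcc_of_mem hcd ht]

lemma mul_le_intervalIntegral_of_le_on {f : ℝ → ℝ} {a a' b' b m : ℝ} (ha : a ≤ a')
    (hab' : a' ≤ b') (hb : b' ≤ b) (hf : IntervalIntegrable f volume a b)
    (hf0 : ∀ x ∈ Icc a b, 0 ≤ f x) (hm : ∀ x ∈ Icc a' b', m ≤ f x) :
    (b' - a') * m ≤ ∫ x in a..b, f x := by
  have hsub : uIcc a' b' ⊆ uIcc a b := by
    rw [uIcc_of_le (ha.trans (hab'.trans hb)), uIcc_of_le hab']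
    exact Icc_subset_Icc ha hb
  calc (b' - a') * m = ∫ _ in a'..b', m := by simp
    _ ≤ ∫ x in a'..b', f x := integral_mono_on hab' intervalIntegrable_const (hf.mono_set hsub) hm
    _ ≤ ∫ x in a..b, f x := integral_mono_interval ha hab' hb
        ((ae_restrict_iff' measurableSet_Ioc).2
          (.of_forall fun x hx => hf0 x (Ioc_subset_Icc_self hx))) hf

lemma one_le_natCast_add_one_div_two {d : ℕ} (hd : 1 ≤ d) : (1 : ℝ) ≤ ((d : ℝ) + 1) / 2 := by
  have : (1 : ℝ) ≤ d := by exact_mod_cast hd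
  linarith

lemma one_sub_div_sq_mem_Icc {z R : ℝ} (hR : 0 < R) (hz : z ∈ Icc 0 R) :
    1 - (z / R) ^ 2 ∈ Icc (0:ℝ) 1 := by
  have h0 : 0 ≤ z / R := div_nonneg hz.1 hR.le
  have h1 : z / R ≤ 1 := div_le_one_of_le₀ hz.2 hR.le
  constructor <;> nlinarith

noncomputable def ballTimeIntegrand (d : ℕ) (K : ℝ → ℝ → ℝ) (R τ z : ℝ) : ℝ :=
  z ^ (d - 1) * K z τ * regIncBeta (1 - (z / R) ^ 2) (((d : ℝ) + 1) / 2) (1 / 2)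

/-- Up to normalising constants, the variance of the average over `B × [0, T]`, `B ⊆ ℝᵈ` a ball
of diameter `R`, of a stationary field with covariance `K (distance) (time lag)`: `1 - τ / T` is
the density of the time lag of two uniform points of `[0, T]`, and
`z ^ (d - 1) I_{1 - (z/R)²}((d+1)/2, 1/2)` that of the distance of two uniform points of `B`. -/
noncomputable def ballTimeIntegral (d : ℕ) (K : ℝ → ℝ → ℝ) (T R : ℝ) : ℝ :=
  ∫ τ in (0:ℝ)..T, (1 - τ / T) * ∫ z in (0:ℝ)..R, ballTimeIntegrand d K R τ z

section BallTimeIntegral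

variable {d : ℕ} {K : ℝ → ℝ → ℝ} {T R : ℝ}

lemma continuousOn_ballTimeIntegrand (hd : 1 ≤ d) (hR : 0 < R)
    (hK : ContinuousOn (Function.uncurry K) (Icc 0 R ×ˢ Icc 0 T)) :
    ContinuousOn (Function.uncurry (ballTimeIntegrand d K R)) (Icc 0 T ×ˢ Icc 0 R) := by
  have hKs : ContinuousOn (fun q : ℝ × ℝ => K q.2 q.1) (Icc 0 T ×ˢ Icc 0 R) :=
    hK.comp continuous_swap.continuousOn fun q hq => ⟨hq.2, hq.1⟩
  have hI : ContinuousOn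
      (fun q : ℝ × ℝ => regIncBeta (1 - (q.2 / R) ^ 2) (((d : ℝ) + 1) / 2) (1 / 2))
      (Icc 0 T ×ˢ Icc 0 R) :=
    (continuousOn_regIncBeta (one_le_natCast_add_one_div_two hd) one_half_pos).comp
      (by fun_prop) fun q hq => one_sub_div_sq_mem_Icc hR hq.2
  exact ((continuous_snd.pow _).continuousOn.mul hKs).mul hI

lemma ballTimeIntegrand_nonneg (hd : 1 ≤ d) (hR : 0 < R) {τ z : ℝ} (hz : z ∈ Icc 0 R)
    (hK : 0 ≤ K z τ) : 0 ≤ ballTimeIntegrand d K R τ z :=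
  mul_nonneg (mul_nonneg (pow_nonneg hz.1 _) hK)
    (regIncBeta_nonneg (one_le_natCast_add_one_div_two hd) one_half_pos
      (one_sub_div_sq_mem_Icc hR hz))

lemma le_ballTimeIntegrand (hd : 1 ≤ d) (hR : 0 < R) {m τ z : ℝ} (hm0 : 0 ≤ m)
    (hz : z ∈ Icc (R / 4) (R / 2)) (hm : m ≤ K z τ) :
    (R / 4) ^ (d - 1) * m * regIncBeta (3 / 4) (((d : ℝ) + 1) / 2) (1 / 2) ≤
      ballTimeIntegrand d K R τ z := by
  have hp := one_le_natCast_add_one_div_two hd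
  have hzR : z ∈ Icc 0 R := ⟨by linarith [hz.1], by linarith [hz.2]⟩
  have hI : regIncBeta (3 / 4) (((d : ℝ) + 1) / 2) (1 / 2) ≤
      regIncBeta (1 - (z / R) ^ 2) (((d : ℝ) + 1) / 2) (1 / 2) := by
    have h0 : 0 ≤ z / R := div_nonneg hzR.1 hR.le
    have h1 : z / R ≤ 1 / 2 := by rw [div_le_iff₀ hR]; linarith [hz.2]
    exact regIncBeta_monotoneOn hp one_half_pos (by norm_num) (one_sub_div_sq_mem_Icc hR hzR)
      (by nlinarith)
  exact mul_le_mul (mul_le_mul (pow_le_pow_left₀ (by positivity) hz.1 _) hm hm0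
    (pow_nonneg hzR.1 _)) hI (regIncBeta_nonneg hp one_half_pos (by norm_num))
    (mul_nonneg (pow_nonneg hzR.1 _) (hm0.trans hm))

theorem ballTimeIntegral_ge (hd : 1 ≤ d) (hT : 0 < T) (hR : 0 < R)
    (hK : ContinuousOn (Function.uncurry K) (Icc 0 R ×ˢ Icc 0 T))
    (hK0 : ∀ z ∈ Icc 0 R, ∀ τ ∈ Icc 0 T, 0 ≤ K z τ) {m : ℝ} (hm0 : 0 ≤ m)
    (hm : ∀ z ∈ Icc (R / 4) (R / 2), ∀ τ ∈ Icc (T / 2) (3 / 4 * T), m ≤ K z τ) :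
    T / 16 * (R / 4) ^ d * m * regIncBeta (3 / 4) (((d : ℝ) + 1) / 2) (1 / 2) ≤
      ballTimeIntegral d K T R := by
  set B := regIncBeta (3 / 4) (((d : ℝ) + 1) / 2) (1 / 2)
  have hB : 0 ≤ B := regIncBeta_nonneg (one_le_natCast_add_one_div_two hd) one_half_pos
    (by norm_num)
  have hf := continuousOn_ballTimeIntegrand hd hR hK
  have hF0 : ∀ τ ∈ Icc 0 T, 0 ≤ (1 - τ / T) * ∫ z in (0:ℝ)..R, ballTimeIntegrand d K R τ z :=
    fun τ hτ => mul_nonneg (by rw [sub_nonneg, div_le_one hT]; exact hτ.2)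
      (integral_nonneg hR.le fun z hz => ballTimeIntegrand_nonneg hd hR hz (hK0 z hz τ hτ))
  have hinner : ∀ τ ∈ Icc (T / 2) (3 / 4 * T), 1 / 4 * ((R / 4) ^ d * m * B) ≤
      (1 - τ / T) * ∫ z in (0:ℝ)..R, ballTimeIntegrand d K R τ z := by
    intro τ hτ
    have hτT : τ ∈ Icc 0 T := ⟨by linarith [hτ.1], by linarith [hτ.2]⟩
    have hlow := mul_le_intervalIntegral_of_le_on (a' := R / 4) (b' := R / 2) (by positivity)
      (by linarith) (by linarith) ((hf.uncurry_left τ hτT).intervalIntegrable_of_Icc hR.le)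
      (fun z hz => ballTimeIntegrand_nonneg hd hR hz (hK0 z hz τ hτT))
      (fun z hz => le_ballTimeIntegrand hd hR hm0 hz (hm z hz τ hτ))
    have hτ' : 1 / 4 ≤ 1 - τ / T := by
      have : τ / T ≤ 3 / 4 := by rw [div_le_iff₀ hT]; linarith [hτ.2]
      linarith
    rw [← pow_sub_one_mul (by omega : d ≠ 0)]
    exact mul_le_mul hτ' (le_of_eq_of_le (by ring) hlow) (by positivity) (by linarith)
  have hF : ContinuousOn (fun τ => (1 - τ / T) * ∫ z in (0:ℝ)..R, ballTimeIntegrand d K R τ z)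
      (Icc 0 T) :=
    (continuousOn_const.sub (continuousOn_id.div_const T)).mul
      (continuousOn_intervalIntegral_of_continuousOn_prod hT.le hR.le hf)
  exact le_of_eq_of_le (by ring) (mul_le_intervalIntegral_of_le_on (a' := T / 2)
    (b' := 3 / 4 * T) (by positivity) (by linarith) (by linarith)
    (hF.intervalIntegrable_of_Icc hT.le) hF0 hinner)

end BallTimeIntegral

noncomputable def gneitingCov (d : ℕ) (σ2 a c' α β γ' ν z τ : ℝ) : ℝ :=
  σ2 / (1 + a * τ ^ (2 * α)) ^ (β * d / 2) *
    (1 + c' * (z ^ 2 / (1 + a * τ ^ (2 * α)) ^ β) ^ γ') ^ (-ν)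

section Gneiting

variable {d : ℕ} {σ2 a c' α β γ' ν : ℝ}

lemma one_add_mul_rpow_pos (ha : 0 ≤ a) {τ : ℝ} (hτ : 0 ≤ τ) : 0 < 1 + a * τ ^ (2 * α) := by
  have := rpow_nonneg hτ (2 * α); positivity

lemma gneitingCov_nonneg (hσ2 : 0 ≤ σ2) (ha : 0 ≤ a) (hc' : 0 ≤ c') {z τ : ℝ} (hτ : 0 ≤ τ) :
    0 ≤ gneitingCov d σ2 a c' α β γ' ν z τ := by
  have hD := one_add_mul_rpow_pos (α := α) ha hτ
  unfold gneitingCov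
  have := rpow_nonneg (div_nonneg (sq_nonneg z) (rpow_nonneg hD.le β)) γ'
  positivity

lemma continuousOn_gneitingCov (ha : 0 ≤ a) (hc' : 0 ≤ c') (hα : 0 ≤ α) (hγ' : 0 ≤ γ') :
    ContinuousOn (Function.uncurry (gneitingCov d σ2 a c' α β γ' ν)) {q | 0 ≤ q.2} := by
  have hD : ContinuousOn (fun q : ℝ × ℝ => 1 + a * q.2 ^ (2 * α)) {q | 0 ≤ q.2} :=
    (continuous_const.add (continuous_const.mul
      ((continuous_rpow_const (by positivity)).comp continuous_snd))).continuousOn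
  have hD0 : ∀ q ∈ {q : ℝ × ℝ | 0 ≤ q.2}, 1 + a * q.2 ^ (2 * α) ≠ 0 := fun q hq =>
    (one_add_mul_rpow_pos ha hq).ne'
  have hDr {r : ℝ} : ContinuousOn (fun q : ℝ × ℝ => (1 + a * q.2 ^ (2 * α)) ^ r) {q | 0 ≤ q.2} :=
    hD.rpow_const fun q hq => .inl (hD0 q hq)
  have hDr0 {r : ℝ} : ∀ q ∈ {q : ℝ × ℝ | 0 ≤ q.2}, (1 + a * q.2 ^ (2 * α)) ^ r ≠ 0 :=
    fun q hq => (rpow_pos_of_pos (one_add_mul_rpow_pos ha hq) r).ne'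
  have hx : ContinuousOn (fun q : ℝ × ℝ => (q.1 ^ 2 / (1 + a * q.2 ^ (2 * α)) ^ β) ^ γ')
      {q | 0 ≤ q.2} :=
    ((continuous_fst.pow 2).continuousOn.div hDr hDr0).rpow_const fun _ _ => .inr hγ'
  refine (continuousOn_const.div hDr hDr0).mul
    ((continuousOn_const.add (continuousOn_const.mul hx)).rpow_const fun q hq => .inl ?_)
  have := mul_nonneg hc' (rpow_nonneg (div_nonneg (sq_nonneg q.1)
    (rpow_nonneg (one_add_mul_rpow_pos (α := α) ha hq).le β)) γ')
  exact ne_of_gt (by simp only [Pi.add_apply, Pi.mul_apply]; linarith)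

lemma sq_div_one_add_mul_rpow_le (ha : 0 < a) (hα : 0 ≤ α) (hβ : 0 ≤ β) {γ T z τ : ℝ}
    (hT : 0 < T) (hτ : T / 2 ≤ τ) (hz : z ∈ Icc 0 (T ^ γ)) :
    z ^ 2 / (1 + a * τ ^ (2 * α)) ^ β ≤ 2 ^ (2 * α * β) / a ^ β * T ^ (2 * (γ - α * β)) := by
  have hden : a * (T / 2) ^ (2 * α) ≤ 1 + a * τ ^ (2 * α) := by
    have := rpow_le_rpow (by positivity) hτ (by positivity : 0 ≤ 2 * α)
    nlinarith
  calc z ^ 2 / (1 + a * τ ^ (2 * α)) ^ β ≤ (T ^ γ) ^ 2 / (a * (T / 2) ^ (2 * α)) ^ β :=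
        div_le_div₀ (by positivity) (pow_le_pow_left₀ hz.1 hz.2 2) (by positivity)
          (rpow_le_rpow (by positivity) hden hβ)
    _ = 2 ^ (2 * α * β) / a ^ β * T ^ (2 * (γ - α * β)) := by
        rw [mul_rpow ha.le (by positivity), ← rpow_mul (by positivity),
          div_rpow hT.le zero_le_two, ← rpow_natCast, ← rpow_mul hT.le,
          show 2 * (γ - α * β) = γ * (2 : ℕ) - 2 * α * β by push_cast; ring, rpow_sub hT]
        field_simp

lemma one_add_mul_rpow_le (ha : 0 ≤ a) (hα : 0 ≤ α) {T τ : ℝ} (hT : 1 ≤ T) (hτ : τ ∈ Icc 0 T) :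
    1 + a * τ ^ (2 * α) ≤ (1 + a) * T ^ (2 * α) := by
  have h1 := rpow_le_rpow hτ.1 hτ.2 (by positivity : 0 ≤ 2 * α)
  have h2 := one_le_rpow hT (by positivity : 0 ≤ 2 * α)
  nlinarith

lemma gneitingCov_ge (hσ2 : 0 ≤ σ2) (ha : 0 < a) (hc' : 0 ≤ c') (hα : 0 ≤ α) (hβ : 0 ≤ β)
    (hγ' : 0 ≤ γ') (hν : 0 ≤ ν) {γ T z τ : ℝ} (hγ : α * β ≤ γ) (hT : 1 ≤ T)
    (hτ : τ ∈ Icc (T / 2) T) (hz : z ∈ Icc 0 (T ^ γ)) :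
    σ2 * (1 + a) ^ (-(β * d / 2)) * (1 + c' * (2 ^ (2 * α * β) / a ^ β) ^ γ') ^ (-ν) *
        T ^ (-(α * β * d + 2 * γ' * (γ - α * β) * ν)) ≤
      gneitingCov d σ2 a c' α β γ' ν z τ := by
  have hT0 : 0 < T := by linarith
  have hτ0 : 0 ≤ τ := by linarith [hτ.1]
  set D := 1 + a * τ ^ (2 * α)
  have hD : 0 < D := one_add_mul_rpow_pos ha.le hτ0
  set c₀ : ℝ := 2 ^ (2 * α * β) / a ^ β
  set e := 2 * γ' * (γ - α * β)
  have htemporal : σ2 * (1 + a) ^ (-(β * d / 2)) * T ^ (-(α * β * d)) ≤ σ2 / D ^ (β * d / 2) := by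
    have hDT : D ^ (β * d / 2) ≤ (1 + a) ^ (β * d / 2) * T ^ (α * β * d) := by
      calc D ^ (β * d / 2) ≤ ((1 + a) * T ^ (2 * α)) ^ (β * d / 2) :=
            rpow_le_rpow hD.le (one_add_mul_rpow_le ha.le hα hT ⟨hτ0, hτ.2⟩) (by positivity)
        _ = (1 + a) ^ (β * d / 2) * T ^ (α * β * d) := by
            rw [mul_rpow (by linarith) (by positivity), ← rpow_mul hT0.le]
            ring_nf
    calc σ2 * (1 + a) ^ (-(β * d / 2)) * T ^ (-(α * β * d))
        = σ2 / ((1 + a) ^ (β * d / 2) * T ^ (α * β * d)) := by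
          rw [rpow_neg (by linarith), rpow_neg hT0.le]; field_simp
      _ ≤ σ2 / D ^ (β * d / 2) := div_le_div_of_nonneg_left hσ2 (by positivity) hDT
  have hspatial : (1 + c' * c₀ ^ γ') ^ (-ν) * T ^ (-(e * ν)) ≤
      (1 + c' * (z ^ 2 / D ^ β) ^ γ') ^ (-ν) := by
    have hx : (z ^ 2 / D ^ β) ^ γ' ≤ c₀ ^ γ' * T ^ e := by
      calc (z ^ 2 / D ^ β) ^ γ' ≤ (c₀ * T ^ (2 * (γ - α * β))) ^ γ' :=
            rpow_le_rpow (by positivity) (sq_div_one_add_mul_rpow_le ha hα hβ hT0 hτ.1 hz) hγ'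
        _ = c₀ ^ γ' * T ^ e := by
            rw [mul_rpow (by positivity) (by positivity), ← rpow_mul hT0.le,
              show 2 * (γ - α * β) * γ' = e by simp only [e]; ring]
    have hTe : 1 ≤ T ^ e := one_le_rpow hT (by nlinarith)
    calc (1 + c' * c₀ ^ γ') ^ (-ν) * T ^ (-(e * ν)) = ((1 + c' * c₀ ^ γ') * T ^ e) ^ (-ν) := by
          rw [mul_rpow (by positivity) (by positivity), ← rpow_mul hT0.le, mul_neg]
      _ ≤ _ := rpow_le_rpow_of_nonpos (by positivity) (by nlinarith) (by linarith)
  calc _ = (σ2 * (1 + a) ^ (-(β * d / 2)) * T ^ (-(α * β * d))) *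
        ((1 + c' * c₀ ^ γ') ^ (-ν) * T ^ (-(e * ν))) := by
        rw [neg_add, rpow_add hT0]; ring
    _ ≤ _ := mul_le_mul htemporal hspatial (by positivity) (by positivity)

end Gneiting

theorem exists_pos_mul_rpow_le_ballTimeIntegral_gneitingCov {d : ℕ} {σ2 a c' α β γ' ν γ : ℝ}
    (hd : 1 ≤ d) (hσ2 : 0 < σ2) (ha : 0 < a) (hc' : 0 ≤ c') (hα : 0 ≤ α) (hβ : 0 ≤ β)
    (hγ' : 0 ≤ γ') (hν : 0 ≤ ν) (hγ : α * β ≤ γ) :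
    ∃ c > 0, ∀ T ≥ 1, c * T ^ (1 + γ * d - α * β * d - 2 * γ' * (γ - α * β) * ν) ≤
      ballTimeIntegral d (gneitingCov d σ2 a c' α β γ' ν) T (2 * T ^ γ) := by
  set m₀ := σ2 * (1 + a) ^ (-(β * d / 2)) * (1 + c' * (2 ^ (2 * α * β) / a ^ β) ^ γ') ^ (-ν)
  set B := regIncBeta (3 / 4) (((d : ℝ) + 1) / 2) (1 / 2)
  have hB : 0 < B :=
    regIncBeta_pos (one_le_natCast_add_one_div_two hd) one_half_pos (by norm_num)
  refine ⟨1 / 16 * (1 / 2) ^ d * m₀ * B, by positivity, fun T hT => ?_⟩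
  have hT0 : 0 < T := by linarith
  set e := α * β * d + 2 * γ' * (γ - α * β) * ν
  have hlow := ballTimeIntegral_ge (R := 2 * T ^ γ) (m := m₀ * T ^ (-e)) hd hT0 (by positivity)
    ((continuousOn_gneitingCov ha.le hc' hα hγ').mono fun q hq => hq.2.1)
    (fun z _ τ hτ => gneitingCov_nonneg hσ2.le ha.le hc' hτ.1) (by positivity)
    (fun z hz τ hτ => gneitingCov_ge hσ2.le ha hc' hα hβ hγ' hν hγ hT
      ⟨hτ.1, by linarith [hτ.2]⟩ ⟨by linarith [hz.1, rpow_pos_of_pos hT0 γ], by linarith [hz.2]⟩)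
  refine le_of_eq_of_le ?_ hlow
  rw [show 1 + γ * d - α * β * d - 2 * γ' * (γ - α * β) * ν = 1 + γ * d + -e by ring,
    rpow_add hT0, rpow_add hT0, rpow_one, rpow_mul_natCast hT0.le]
  ring

theorem stmt15_general (d : ℕ) (hd : 1 ≤ d) (σ2 a c' α β γ' ν γ δ₁ δ₂ : ℝ)
    (hσ2 : 0 < σ2) (ha : 0 < a) (hc' : 0 < c')
    (hα : 0 < α) (hβ : 0 < β)
    (hγ' : 0 < γ') (hν : 0 < ν)
    (hγαβ : α * β < γ)
    (hδ₁ : δ₁ ∈ Set.Ioo 0 (1 - 2 * ν * γ' * (γ - α * β)))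
    (hδ₂ : δ₂ ∈ Set.Ioo 0 (1 - α * β / γ))
    (C : ℝ → ℝ → ℝ)
    (hC : ∀ z τ : ℝ, C z τ =
      σ2 / (1 + a * τ ^ (2 * α)) ^ (β * d / 2) *
        (1 + c' * (z ^ 2 / (1 + a * τ ^ (2 * α)) ^ β) ^ γ') ^ (-ν)) :
    Tendsto (fun T : ℝ => T ^ (-δ₁ - γ * d * δ₂) *
        ∫ τ in (0:ℝ)..T, (1 - τ / T) *
          ∫ z in (0:ℝ)..(2 * T ^ γ),
            z ^ (d - 1) * C z τ *
              regIncBeta (1 - (z / (2 * T ^ γ)) ^ 2) (((d : ℝ) + 1) / 2) (1 / 2))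
      atTop atTop := by
  obtain rfl : C = gneitingCov d σ2 a c' α β γ' ν := funext₂ hC
  obtain ⟨c, hc, hlow⟩ := exists_pos_mul_rpow_le_ballTimeIntegral_gneitingCov hd hσ2 ha hc'.le
    hα.le hβ.le hγ'.le hν.le hγαβ.le
  have hγ : 0 < γ := (mul_pos hα hβ).trans hγαβ
  have hγδ₂ : γ * δ₂ < γ - α * β := by
    have := mul_lt_mul_of_pos_left hδ₂.2 hγ
    rwa [mul_sub, mul_one, mul_div_cancel₀ _ hγ.ne'] at this
  have hE : 0 < -δ₁ - γ * d * δ₂ + (1 + γ * d - α * β * d - 2 * γ' * (γ - α * β) * ν) := by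
    have : 0 ≤ (d : ℝ) * (γ - α * β - γ * δ₂) := by positivity
    nlinarith [hδ₁.2]
  refine tendsto_atTop_mono' atTop ?_ ((tendsto_rpow_atTop hE).const_mul_atTop hc)
  filter_upwards [eventually_ge_atTop 1] with T hT
  rw [rpow_add (by linarith), mul_left_comm]
  exact mul_le_mul_of_nonneg_left (hlow T hT) (rpow_nonneg (by linarith) _)

theorem stmt15 (d : ℕ) (hd : 1 ≤ d) (σ2 a c' α β γ' ν γ δ₁ δ₂ : ℝ)
    (hσ2 : 0 < σ2) (ha : 0 < a) (hc' : 0 < c')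
    (hα : 0 < α) (hα1 : α ≤ 1) (hβ : 0 < β) (hβ1 : β ≤ 1)
    (hγ' : 0 < γ') (hγ'1 : γ' ≤ 1) (hν : 0 < ν)
    (hγαβ : α * β < γ) (hγ'ν : γ' * ν < 1 / (2 * (γ - α * β)))
    (hδ₁ : δ₁ ∈ Set.Ioo 0 (1 - 2 * ν * γ' * (γ - α * β)))
    (hδ₂ : δ₂ ∈ Set.Ioo 0 (1 - α * β / γ))
    (C : ℝ → ℝ → ℝ)
    (hC : ∀ z τ : ℝ, C z τ =
      σ2 / (1 + a * τ ^ (2 * α)) ^ (β * d / 2) *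
        (1 + c' * (z ^ 2 / (1 + a * τ ^ (2 * α)) ^ β) ^ γ') ^ (-ν)) :
    Tendsto (fun T : ℝ => T ^ (-δ₁ - γ * d * δ₂) *
        ∫ τ in (0:ℝ)..T, (1 - τ / T) *
          ∫ z in (0:ℝ)..(2 * T ^ γ),
            z ^ (d - 1) * C z τ *
              regIncBeta (1 - (z / (2 * T ^ γ)) ^ 2) (((d : ℝ) + 1) / 2) (1 / 2))
      atTop atTop :=
  stmt15_general d hd σ2 a c' α β γ' ν γ δ₁ δ₂ hσ2 ha hc' hα hβ hγ' hν hγαβ hδ₁ hδ₂ C hC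
end
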